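/- Suppose an M×N real matrix Φ satisfies the RIP of order K+1 with isometry constant δ < 1/3. Let x ∈ ℝ^N with ‖x‖₀ ≤ K, let x'(1), x'(2), …, x'(K) denote the entries of x ordered so that |x'(1)| ≥ |x'(2)| ≥ ⋯ ≥ |x'(K)| ≥ 0, and suppose |x'(j)|/|x'(j+1)| ≥ α for all j ∈ {1,…,K−1}, where α > (1 + 2(δ/(1−δ))√(K−1)) / (1 − 2δ/(1−δ)). Then for any run of Orthogonal Matching Pursuit applied to y = Φx (Λ⁰ = ∅; at each iteration x^ℓ minimizes ‖y − Φz‖₂ over z supported on Λ^ℓ, h^ℓ = Φᵀ(y − Φx^ℓ), and Λ^{ℓ+1} = Λ^ℓ ∪ {j_ℓ} with j_ℓ maximizing |h^ℓ(j)|), OMP recovers x exactly from y in K iterations: supp(x) ⊆ Λ^K and the least-squares estimate on Λ^K equals x. -/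

import Mathlib

noncomputable section

namespace OMP

open Matrix Finset

/-- The support of a vector, as a `Finset`. -/
def supp {n : ℕ} (x : Fin n → ℝ) : Finset (Fin n) :=
  Finset.univ.filter fun j => x j ≠ 0

/-- The Euclidean (ℓ²) norm of a vector. -/
def l2 {n : ℕ} (x : Fin n → ℝ) : ℝ := Real.sqrt (∑ j, x j ^ 2)

/-- The ℓ^∞ norm of a vector. -/
def linf {n : ℕ} (x : Fin n → ℝ) : ℝ := ⨆ j, |x j|

/-- The standard inner product of two vectors. -/
def dotp {n : ℕ} (x y : Fin n → ℝ) : ℝ := ∑ j, x j * y j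

/-- The restriction of a vector to a set of indices (zero elsewhere). -/
def restr {n : ℕ} (Γ : Finset (Fin n)) (x : Fin n → ℝ) : Fin n → ℝ :=
  fun j => if j ∈ Γ then x j else 0

/-- The restricted isometry property of order `K` with isometry constant `δ`. -/
def RIP {M N : ℕ} (K : ℕ) (Φ : Matrix (Fin M) (Fin N) ℝ) (δ : ℝ) : Prop :=
  0 < δ ∧ δ < 1 ∧ ∀ x : Fin N → ℝ, (supp x).card ≤ K →
    (1 - δ) * l2 x ^ 2 ≤ l2 (Φ.mulVec x) ^ 2 ∧
      l2 (Φ.mulVec x) ^ 2 ≤ (1 + δ) * l2 x ^ 2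

/-- The span of the columns of `Φ` indexed by `Λ`, as a submodule of Euclidean space. -/
def colSpan {M N : ℕ} (Φ : Matrix (Fin M) (Fin N) ℝ) (Λ : Finset (Fin N)) :
    Submodule ℝ (EuclideanSpace ℝ (Fin M)) :=
  Submodule.span ℝ ((fun j => (WithLp.equiv 2 (Fin M → ℝ)).symm fun i => Φ i j) '' (Λ : Set (Fin N)))

/-- Orthogonal projection `P_Λ` onto the span of the columns of `Φ` indexed by `Λ`. -/
def projCol {M N : ℕ} (Φ : Matrix (Fin M) (Fin N) ℝ) (Λ : Finset (Fin N))
    (v : Fin M → ℝ) : Fin M → ℝ :=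
  WithLp.equiv 2 (Fin M → ℝ)
    (Submodule.orthogonalProjection (colSpan Φ Λ) ((WithLp.equiv 2 (Fin M → ℝ)).symm v) : EuclideanSpace ℝ (Fin M))

/-- The matrix `A_Λ = (I - P_Λ) Φ`: the columns of `Φ` orthogonalized against `colSpan Φ Λ`. -/
def Amat {M N : ℕ} (Φ : Matrix (Fin M) (Fin N) ℝ) (Λ : Finset (Fin N)) :
    Matrix (Fin M) (Fin N) ℝ :=
  Matrix.of fun i j => Φ i j - projCol Φ Λ (fun i' => Φ i' j) i

/-!
Let `Λ` be the positions of the `ℓ` largest entries of `x`, `z` the least-squares fit on `Λ`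
and `h = Φᵀ (Φ x - Φ z)` the correlation vector of the next OMP step. With `u = x - z`, RIP of
order `K + 1` applied to `u` and a unit vector gives `|h j - u j| ≤ δ ‖u‖`, while comparing `z`
with the competitor `x` restricted to `Λ` gives `(1 - δ) ‖u‖ ≤ ‖x_{Λᶜ}‖`. On `Λ` the correlation
vanishes (normal equations) and off `Λ` we have `u = x`. If `a` is the largest remaining entry,
the decay ratio `α` bounds all other remaining entries by `a / α`, so `‖x_{Λᶜ}‖ ≤ a + √(K-1) a / α`.
Hence, with `ε = δ / (1 - δ) ‖x_{Λᶜ}‖`, the correlation at the largest remaining entry is at least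
`a - ε` and every other one at most `a / α + ε`; the threshold on `α` says exactly that
`a / α + 2 ε < a`. By induction OMP picks the support in decreasing order of magnitude, and once
`supp x ⊆ Λ^K` the lower RIP bound makes the least-squares solution equal to `x`.
-/

section Vectors

variable {n : ℕ}

lemma mem_supp {x : Fin n → ℝ} {j : Fin n} : j ∈ supp x ↔ x j ≠ 0 := by simp [supp]

lemma supp_subset_iff {x : Fin n → ℝ} {Γ : Finset (Fin n)} : supp x ⊆ Γ ↔ ∀ j ∉ Γ, x j = 0 := by
  simp only [subset_iff, mem_supp]
  exact forall_congr' fun j => not_imp_comm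

lemma supp_sub_subset (x y : Fin n → ℝ) : supp (x - y) ⊆ supp x ∪ supp y := by
  intro j
  simp only [mem_union, mem_supp, Pi.sub_apply]
  contrapose!
  rintro ⟨hx, hy⟩
  rw [hx, hy, sub_zero]

lemma supp_restr_subset (Γ : Finset (Fin n)) (x : Fin n → ℝ) : supp (restr Γ x) ⊆ supp x ∩ Γ := by
  intro j
  simp only [mem_inter, mem_supp, restr]
  split_ifs with h <;> simp [h]

lemma sub_restr (Γ : Finset (Fin n)) (x : Fin n → ℝ) : x - restr Γ x = restr Γᶜ x := by
  ext j
  by_cases h : j ∈ Γ <;> simp [restr, h]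

lemma l2_eq_sqrt_dotProduct (x : Fin n → ℝ) : l2 x = √(x ⬝ᵥ x) := by
  simp only [l2, dotProduct, sq]

lemma dotProduct_self_nonneg (x : Fin n → ℝ) : 0 ≤ x ⬝ᵥ x :=
  sum_nonneg fun j _ => mul_self_nonneg (x j)

lemma l2_nonneg (x : Fin n → ℝ) : 0 ≤ l2 x := Real.sqrt_nonneg _

lemma l2_sq (x : Fin n → ℝ) : l2 x ^ 2 = x ⬝ᵥ x := by
  rw [l2_eq_sqrt_dotProduct, Real.sq_sqrt (dotProduct_self_nonneg x)]

lemma l2_eq_zero {x : Fin n → ℝ} : l2 x = 0 ↔ x = 0 := by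
  rw [l2_eq_sqrt_dotProduct, Real.sqrt_eq_zero (dotProduct_self_nonneg x), dotProduct_self_eq_zero]

@[simp]
lemma l2_zero : l2 (0 : Fin n → ℝ) = 0 := l2_eq_zero.2 rfl

@[simp]
lemma l2_single_one (j : Fin n) : l2 (Pi.single j 1 : Fin n → ℝ) = 1 := by
  simp [l2_eq_sqrt_dotProduct]

lemma dotProduct_eq_zero_of_forall_l2_le {r w : Fin n → ℝ}
    (h : ∀ t : ℝ, l2 r ≤ l2 (r - t • w)) : w ⬝ᵥ r = 0 := by
  set c := w ⬝ᵥ r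
  set d := w ⬝ᵥ w
  have hd : 0 ≤ d := dotProduct_self_nonneg w
  -- `t = c / (d + 1)` rather than `c / d`, so that `w = 0` needs no separate case
  have ht := pow_le_pow_left₀ (l2_nonneg _) (h (c / (d + 1))) 2
  simp only [l2_sq, sub_dotProduct, dotProduct_sub, smul_dotProduct, dotProduct_smul,
    smul_eq_mul, dotProduct_comm r w] at ht
  have hc : c ^ 2 * (d + 2) ≤ 0 := by
    field_simp at ht
    nlinarith
  nlinarith [sq_nonneg c]

lemma abs_restr_le (Γ : Finset (Fin n)) (x : Fin n → ℝ) (j : Fin n) :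
    |restr Γ x j| ≤ |x j| := by
  unfold restr
  split_ifs <;> simp

lemma l2_le_add_sqrt_mul {m : ℕ} {v : Fin n → ℝ} {j₀ : Fin n} {a b : ℝ}
    (hm : #((supp v).erase j₀) ≤ m) (hb : 0 ≤ b) (h₀ : |v j₀| ≤ a)
    (h : ∀ j ≠ j₀, |v j| ≤ b) : l2 v ≤ a + √m * b := by
  have ha : 0 ≤ a := (abs_nonneg _).trans h₀
  have hsq : l2 v ^ 2 ≤ a ^ 2 + m * b ^ 2 :=
    calc l2 v ^ 2 = ∑ j ∈ supp v, v j ^ 2 := by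
          rw [l2, Real.sq_sqrt (sum_nonneg fun _ _ => sq_nonneg _)]
          refine (sum_subset (subset_univ _) fun j _ hj => ?_).symm
          rw [mem_supp, not_not] at hj
          rw [hj, sq, mul_zero]
      _ ≤ ∑ j ∈ insert j₀ ((supp v).erase j₀), v j ^ 2 :=
          sum_le_sum_of_subset_of_nonneg (insert_erase_subset _ _) fun _ _ _ => sq_nonneg _
      _ = v j₀ ^ 2 + ∑ j ∈ (supp v).erase j₀, v j ^ 2 := sum_insert (notMem_erase _ _)
      _ ≤ a ^ 2 + ∑ j ∈ (supp v).erase j₀, b ^ 2 := by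
          refine add_le_add (sq_le_sq' (abs_le.1 h₀).1 (abs_le.1 h₀).2) (sum_le_sum fun j hj => ?_)
          have hj := abs_le.1 (h j (ne_of_mem_erase hj))
          exact sq_le_sq' hj.1 hj.2
      _ ≤ a ^ 2 + m * b ^ 2 := by
          rw [sum_const, nsmul_eq_mul]
          gcongr
  refine (pow_le_pow_iff_left₀ (l2_nonneg v) (by positivity) two_ne_zero).1 (hsq.trans ?_)
  nlinarith [Real.sq_sqrt m.cast_nonneg, mul_nonneg (mul_nonneg ha (Real.sqrt_nonneg m)) hb]

end Vectors

section RIP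

variable {M N K : ℕ} {Φ : Matrix (Fin M) (Fin N) ℝ} {δ : ℝ}

lemma RIP.abs_dotProduct_self_sub_le (hR : RIP K Φ δ) {w : Fin N → ℝ} (hw : #(supp w) ≤ K) :
    |(Φ *ᵥ w) ⬝ᵥ (Φ *ᵥ w) - w ⬝ᵥ w| ≤ δ * (w ⬝ᵥ w) := by
  obtain ⟨hlo, hhi⟩ := hR.2.2 w hw
  rw [l2_sq, l2_sq] at hlo hhi
  rw [abs_le]
  constructor <;> linarith

lemma RIP.abs_dotProduct_sub_le (hR : RIP K Φ δ) {u v : Fin N → ℝ}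
    (huv : #(supp u ∪ supp v) ≤ K) :
    |(Φ *ᵥ u) ⬝ᵥ (Φ *ᵥ v) - u ⬝ᵥ v| ≤ δ * l2 u * l2 v := by
  rcases (l2_nonneg u).eq_or_lt' with hu | hu
  · obtain rfl := l2_eq_zero.1 hu
    simp
  rcases (l2_nonneg v).eq_or_lt' with hv | hv
  · obtain rfl := l2_eq_zero.1 hv
    simp
  -- polarization, with `u` and `v` rescaled to the same norm `l2 u * l2 v`
  have hcard : ∀ s : ℝ, #(supp (l2 v • u + s • v)) ≤ K := fun s =>
    (card_le_card fun j => by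
      simp only [mem_union, mem_supp, Pi.add_apply, Pi.smul_apply, smul_eq_mul]
      contrapose!
      rintro ⟨hu, hv⟩
      simp [hu, hv]).trans huv
  have hadd := abs_le.1 (hR.abs_dotProduct_self_sub_le (hcard (l2 u)))
  have hsub := abs_le.1 (hR.abs_dotProduct_self_sub_le (hcard (-l2 u)))
  simp only [mulVec_add, mulVec_smul, dotProduct_add, add_dotProduct, dotProduct_smul,
    smul_dotProduct, smul_eq_mul, dotProduct_comm v u, dotProduct_comm (Φ *ᵥ v) (Φ *ᵥ u),
    ← l2_sq] at hadd hsub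
  have hpos : 0 < 4 * (l2 u * l2 v) := by positivity
  rw [abs_le]
  constructor
  · refine le_of_mul_le_mul_left ?_ hpos
    linear_combination hadd.1 + hsub.2
  · refine le_of_mul_le_mul_left ?_ hpos
    linear_combination hadd.2 + hsub.1

lemma transpose_mulVec_apply (Φ : Matrix (Fin M) (Fin N) ℝ) (r : Fin M → ℝ) (j : Fin N) :
    (Φᵀ *ᵥ r) j = (Φ *ᵥ Pi.single j 1) ⬝ᵥ r := by
  rw [dotProduct_comm, dotProduct_mulVec, dotProduct_single_one, mulVec_transpose]

lemma RIP.abs_transpose_mulVec_mulVec_sub_le (hR : RIP (K + 1) Φ δ) {u : Fin N → ℝ}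
    (hu : #(supp u) ≤ K) (j : Fin N) : |(Φᵀ *ᵥ (Φ *ᵥ u)) j - u j| ≤ δ * l2 u := by
  have hj : #(supp (Pi.single j 1 : Fin N → ℝ)) ≤ 1 :=
    (card_le_card <| supp_subset_iff.2 fun k hk => by
      simp [mem_singleton.not.1 hk]).trans_eq (card_singleton j)
  have hcard : #(supp (Pi.single j 1) ∪ supp u) ≤ K + 1 := by
    have := card_union_le (supp (Pi.single j (1 : ℝ))) (supp u)
    omega
  simpa [transpose_mulVec_apply, single_one_dotProduct] using hR.abs_dotProduct_sub_le hcard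

lemma RIP.one_sub_mul_l2_le (hR : RIP K Φ δ) {u v : Fin N → ℝ} (hu : #(supp u) ≤ K)
    (hv : #(supp v) ≤ K) (h : l2 (Φ *ᵥ u) ≤ l2 (Φ *ᵥ v)) : (1 - δ) * l2 u ≤ l2 v := by
  obtain ⟨hδ, hδ1, hR⟩ := hR
  have hΦu := (hR u hu).1
  have hΦv := (hR v hv).2
  have hsq := pow_le_pow_left₀ (l2_nonneg _) h 2
  refine (pow_le_pow_iff_left₀ (by nlinarith [l2_nonneg u]) (l2_nonneg v) two_ne_zero).1 ?_
  calc ((1 - δ) * l2 u) ^ 2 = (1 - δ) * ((1 - δ) * l2 u ^ 2) := by ring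
    _ ≤ (1 - δ) * ((1 + δ) * l2 v ^ 2) := mul_le_mul_of_nonneg_left (by linarith) (by linarith)
    _ ≤ l2 v ^ 2 := by nlinarith [mul_nonneg (sq_nonneg δ) (sq_nonneg (l2 v))]

end RIP

section LeastSquares

variable {M N K : ℕ} {Φ : Matrix (Fin M) (Fin N) ℝ} {δ : ℝ}

def IsLeastSquares (Φ : Matrix (Fin M) (Fin N) ℝ) (y : Fin M → ℝ) (Λ : Finset (Fin N))
    (z : Fin N → ℝ) : Prop :=
  supp z ⊆ Λ ∧ ∀ z' : Fin N → ℝ, supp z' ⊆ Λ → l2 (y - Φ *ᵥ z) ≤ l2 (y - Φ *ᵥ z')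

lemma IsLeastSquares.supp_sub_subset {y : Fin M → ℝ} {Λ : Finset (Fin N)} {z : Fin N → ℝ}
    (hz : IsLeastSquares Φ y Λ z) (x : Fin N → ℝ) : supp (x - z) ⊆ supp x ∪ Λ :=
  (OMP.supp_sub_subset x z).trans (union_subset_union_right hz.1)

lemma IsLeastSquares.transpose_mulVec_residual_eq_zero {y : Fin M → ℝ} {Λ : Finset (Fin N)}
    {z : Fin N → ℝ} (hz : IsLeastSquares Φ y Λ z) {j : Fin N} (hj : j ∈ Λ) :
    (Φᵀ *ᵥ (y - Φ *ᵥ z)) j = 0 := by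
  rw [transpose_mulVec_apply]
  refine dotProduct_eq_zero_of_forall_l2_le fun t => ?_
  have hsupp : supp (z + t • Pi.single j 1) ⊆ Λ := supp_subset_iff.2 fun k hk => by
    simp [supp_subset_iff.1 hz.1 k hk, ne_of_mem_of_not_mem hj hk |>.symm]
  simpa [mulVec_add, mulVec_smul, sub_add_eq_sub_sub] using hz.2 _ hsupp

lemma IsLeastSquares.one_sub_mul_l2_sub_le (hR : RIP K Φ δ) {x z : Fin N → ℝ}
    {Λ : Finset (Fin N)} (hz : IsLeastSquares Φ (Φ *ᵥ x) Λ z) (hK : #(supp x ∪ Λ) ≤ K) :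
    (1 - δ) * l2 (x - z) ≤ l2 (restr Λᶜ x) := by
  refine hR.one_sub_mul_l2_le ?_ ?_ ?_
  · exact (card_le_card (hz.supp_sub_subset x)).trans hK
  · exact (card_le_card (((supp_restr_subset _ x).trans inter_subset_left).trans
      subset_union_left)).trans hK
  · rw [mulVec_sub, ← sub_restr, mulVec_sub]
    exact hz.2 _ ((supp_restr_subset _ x).trans inter_subset_right)

lemma IsLeastSquares.abs_correlation_sub_le (hR : RIP (K + 1) Φ δ) {x z : Fin N → ℝ}
    {Λ : Finset (Fin N)} (hz : IsLeastSquares Φ (Φ *ᵥ x) Λ z) (hK : #(supp x ∪ Λ) ≤ K)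
    (j : Fin N) :
    |(Φᵀ *ᵥ (Φ *ᵥ x - Φ *ᵥ z)) j - (x - z) j| ≤ δ / (1 - δ) * l2 (restr Λᶜ x) := by
  have hu : #(supp (x - z)) ≤ K := (card_le_card (hz.supp_sub_subset x)).trans hK
  have herr := hz.one_sub_mul_l2_sub_le hR (hK.trans K.le_succ)
  rw [← mulVec_sub]
  refine (hR.abs_transpose_mulVec_mulVec_sub_le hu j).trans ?_
  rw [div_mul_eq_mul_div, le_div_iff₀ (by linarith [hR.2.1])]
  nlinarith [hR.1]

end LeastSquares

section Selection

lemma l2_restr_compl_le {N K : ℕ} {x : Fin N → ℝ} {Λ : Finset (Fin N)} {j₀ : Fin N} {α : ℝ}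
    (hα : 0 < α) (hsp : #(supp x) ≤ K) (hj₀ : j₀ ∈ supp x)
    (hdecay : ∀ j ∉ Λ, j ≠ j₀ → α * |x j| ≤ |x j₀|) :
    l2 (restr Λᶜ x) ≤ |x j₀| + √((K : ℝ) - 1) * (|x j₀| / α) := by
  have hK : 1 ≤ K := (card_pos.2 ⟨j₀, hj₀⟩).trans_le hsp
  have hm : #((supp (restr Λᶜ x)).erase j₀) ≤ K - 1 := by
    have := card_le_card (erase_subset_erase j₀ ((supp_restr_subset Λᶜ x).trans inter_subset_left))
    rw [card_erase_of_mem hj₀] at this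
    omega
  have hrest : ∀ j ≠ j₀, |restr Λᶜ x j| ≤ |x j₀| / α := by
    intro j hj
    by_cases hjΛ : j ∈ Λ
    · simp only [restr, mem_compl, hjΛ, not_true_eq_false, if_false, abs_zero]
      positivity
    · simp only [restr, mem_compl, hjΛ, not_false_eq_true, if_true]
      rw [le_div_iff₀ hα, mul_comm]
      exact hdecay j hjΛ hj
  have := l2_le_add_sqrt_mul hm (by positivity) (abs_restr_le Λᶜ x j₀) hrest
  rwa [Nat.cast_sub hK, Nat.cast_one] at this

lemma pos_of_gt_threshold {δ α c : ℝ} (hδ0 : 0 ≤ δ) (hδ : δ < 1 / 3) (hc : 0 ≤ c)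
    (hα : α > (1 + 2 * (δ / (1 - δ)) * c) / (1 - 2 * δ / (1 - δ))) : 0 < α := by
  have hδ' : 0 ≤ δ / (1 - δ) := div_nonneg hδ0 (by linarith)
  refine lt_of_le_of_lt (div_nonneg (by nlinarith) ?_) hα
  rw [sub_nonneg, div_le_one (by linarith)]
  linarith

lemma div_add_two_mul_lt {δ' α c a t : ℝ} (hδ' : 0 ≤ δ') (hα : 0 < α)
    (hthr : 1 + 2 * δ' * c < α * (1 - 2 * δ')) (ha : 0 < a) (ht : t ≤ a + c * (a / α)) :
    a / α + 2 * (δ' * t) < a :=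
  calc a / α + 2 * (δ' * t) ≤ a / α * (1 + 2 * δ' * c) + 2 * δ' * a := by
        nlinarith [mul_le_mul_of_nonneg_left ht hδ']
    _ < a / α * (α * (1 - 2 * δ')) + 2 * δ' * a := by gcongr
    _ = a := by field_simp; ring

theorem eq_of_selects_max_correlation {M N K : ℕ} {Φ : Matrix (Fin M) (Fin N) ℝ} {δ α : ℝ}
    {x z : Fin N → ℝ} {Λ : Finset (Fin N)} {j₀ j₁ : Fin N}
    (hR : RIP (K + 1) Φ δ) (hδ : δ < 1 / 3)
    (hα : α > (1 + 2 * (δ / (1 - δ)) * √((K : ℝ) - 1)) / (1 - 2 * δ / (1 - δ)))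
    (hsp : #(supp x) ≤ K) (hΛ : Λ ⊆ supp x) (hj₀ : j₀ ∈ supp x) (hj₀Λ : j₀ ∉ Λ)
    (hdecay : ∀ j ∉ Λ, j ≠ j₀ → α * |x j| ≤ |x j₀|) (hz : IsLeastSquares Φ (Φ *ᵥ x) Λ z)
    (hsel : ∀ j, |(Φᵀ *ᵥ (Φ *ᵥ x - Φ *ᵥ z)) j| ≤ |(Φᵀ *ᵥ (Φ *ᵥ x - Φ *ᵥ z)) j₁|) :
    j₁ = j₀ := by
  set h := Φᵀ *ᵥ (Φ *ᵥ x - Φ *ᵥ z)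
  set a := |x j₀|
  set ε := δ / (1 - δ) * l2 (restr Λᶜ x)
  have hδ' : 0 ≤ δ / (1 - δ) := div_nonneg hR.1.le (by linarith)
  have hα0 := pos_of_gt_threshold hR.1.le hδ (Real.sqrt_nonneg _) hα
  have hden : 0 < 1 - 2 * (δ / (1 - δ)) := by
    rw [← mul_div_assoc, sub_pos, div_lt_one (by linarith)]
    linarith
  rw [gt_iff_lt, mul_div_assoc, div_lt_iff₀ hden] at hα
  have hgap : a / α + 2 * ε < a := div_add_two_mul_lt hδ' hα0 hα
    (abs_pos.2 (mem_supp.1 hj₀)) (l2_restr_compl_le hα0 hsp hj₀ hdecay)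
  have hclose := hz.abs_correlation_sub_le hR (by rwa [union_eq_left.2 hΛ])
  have hoff : ∀ j ∉ Λ, (x - z) j = x j := fun j hj => by
    simp [supp_subset_iff.1 hz.1 j hj]
  have hbig : a - ε ≤ |h j₀| := by
    have := hclose j₀
    rw [hoff j₀ hj₀Λ, abs_sub_comm] at this
    linarith [abs_sub_abs_le_abs_sub (x j₀) (h j₀)]
  have hsmall : ∀ j ≠ j₀, |h j| ≤ a / α + ε := by
    intro j hj
    by_cases hjΛ : j ∈ Λ
    · have h0 : h j = 0 := hz.transpose_mulVec_residual_eq_zero hjΛ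
      rw [h0, abs_zero]
      exact add_nonneg (div_nonneg (abs_nonneg _) hα0.le) (mul_nonneg hδ' (l2_nonneg _))
    · have hx : |x j| ≤ a / α := by
        rw [le_div_iff₀ hα0, mul_comm]
        exact hdecay j hjΛ hj
      have := hclose j
      rw [hoff j hjΛ] at this
      linarith [abs_sub_abs_le_abs_sub (h j) (x j)]
  by_contra hne
  linarith [hsel j₀, hsmall j₁ hne]

end Selection

section Ordering

variable {N K : ℕ} {x : Fin N → ℝ} {ord : Fin K → Fin N} {ℓ : ℕ}

/-- When `ord` lists `supp x` by decreasing magnitude, the positions of the `ℓ` largest entries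
of `x`. -/
def leading (ord : Fin K → Fin N) (ℓ : ℕ) : Finset (Fin N) :=
  (univ.filter fun i : Fin K => (i : ℕ) < ℓ).image ord

lemma mem_leading_iff (hinj : Function.Injective ord) {i : Fin K} :
    ord i ∈ leading ord ℓ ↔ (i : ℕ) < ℓ := by
  simp [leading, hinj.eq_iff]

lemma leading_zero : leading ord 0 = ∅ := by
  simp [leading]

lemma leading_succ (h : ℓ < K) : leading ord (ℓ + 1) = insert (ord ⟨ℓ, h⟩) (leading ord ℓ) := by
  rw [leading, leading, ← image_insert]
  congr 1
  ext i
  simp only [mem_filter, mem_univ, true_and, mem_insert, Fin.ext_iff]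
  omega

lemma card_leading (hinj : Function.Injective ord) (h : ℓ ≤ K) : #(leading ord ℓ) = ℓ := by
  rw [leading, card_image_of_injective _ hinj, Fin.card_filter_val_lt, min_eq_right h]

lemma supp_subset_leading (hcover : ∀ j, x j ≠ 0 → ∃ i, ord i = j) : supp x ⊆ leading ord K := by
  intro j hj
  obtain ⟨i, rfl⟩ := hcover j (mem_supp.1 hj)
  simp [leading]

lemma leading_subset_supp (hmono : ∀ i i' : Fin K, i ≤ i' → |x (ord i')| ≤ |x (ord i)|)
    (h : ℓ < K) (hx : x (ord ⟨ℓ, h⟩) ≠ 0) : leading ord ℓ ⊆ supp x := by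
  simp only [leading, image_subset_iff, mem_filter, mem_univ, true_and, mem_supp]
  intro i hi
  rw [← abs_pos] at hx ⊢
  exact hx.trans_le (hmono i ⟨ℓ, h⟩ (Fin.le_def.2 hi.le))

lemma mul_abs_le_of_notMem_leading {α : ℝ} (hα : 0 ≤ α)
    (hcover : ∀ j, x j ≠ 0 → ∃ i, ord i = j)
    (hmono : ∀ i i' : Fin K, i ≤ i' → |x (ord i')| ≤ |x (ord i)|)
    (hratio : ∀ (i : Fin K) (hi : (i : ℕ) + 1 < K), |x (ord i)| ≥ α * |x (ord ⟨i + 1, hi⟩)|)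
    (h : ℓ < K) {j : Fin N} (hj : j ∉ leading ord ℓ) (hne : j ≠ ord ⟨ℓ, h⟩) :
    α * |x j| ≤ |x (ord ⟨ℓ, h⟩)| := by
  by_cases hx : x j = 0
  · simp [hx]
  obtain ⟨i, rfl⟩ := hcover j hx
  have hi : ℓ + 1 ≤ i := by
    have : ¬ (i : ℕ) < ℓ := fun hi => hj (mem_image_of_mem ord (by simpa using hi))
    have : (i : ℕ) ≠ ℓ := fun hi => hne (congrArg ord (Fin.ext hi))
    omega
  have hlt : ℓ + 1 < K := hi.trans_lt i.isLt
  calc α * |x (ord i)| ≤ α * |x (ord ⟨ℓ + 1, hlt⟩)| :=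
        mul_le_mul_of_nonneg_left (hmono _ i (Fin.le_def.2 hi)) hα
    _ ≤ |x (ord ⟨ℓ, h⟩)| := hratio ⟨ℓ, h⟩ hlt

end Ordering

section Run

variable {M N K : ℕ} {Φ : Matrix (Fin M) (Fin N) ℝ} {y : Fin M → ℝ} {Λ : ℕ → Finset (Fin N)}
  {xs : ℕ → Fin N → ℝ} {jsel : ℕ → Fin N}

structure IsOMPRun (Φ : Matrix (Fin M) (Fin N) ℝ) (y : Fin M → ℝ) (K : ℕ)
    (Λ : ℕ → Finset (Fin N)) (xs : ℕ → Fin N → ℝ) (jsel : ℕ → Fin N) : Prop where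
  init : Λ 0 = ∅
  leastSquares : ∀ ℓ ≤ K, IsLeastSquares Φ y (Λ ℓ) (xs ℓ)
  select : ∀ ℓ < K, ∀ j,
    |(Φᵀ *ᵥ (y - Φ *ᵥ xs ℓ)) j| ≤ |(Φᵀ *ᵥ (y - Φ *ᵥ xs ℓ)) (jsel ℓ)|
  step : ∀ ℓ < K, Λ (ℓ + 1) = insert (jsel ℓ) (Λ ℓ)

theorem IsOMPRun.card_le (run : IsOMPRun Φ y K Λ xs jsel) : ∀ ℓ ≤ K, #(Λ ℓ) ≤ ℓ
  | 0, _ => by simp [run.init]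
  | ℓ + 1, h => by
    have := run.card_le ℓ (by omega)
    rw [run.step ℓ h]
    exact (card_insert_le _ _).trans (by omega)

theorem IsOMPRun.supp_inter_leading_subset {δ α : ℝ} {x : Fin N → ℝ} {ord : Fin K → Fin N}
    (run : IsOMPRun Φ (Φ *ᵥ x) K Λ xs jsel) (hR : RIP (K + 1) Φ δ) (hδ : δ < 1 / 3)
    (hα : α > (1 + 2 * (δ / (1 - δ)) * √((K : ℝ) - 1)) / (1 - 2 * δ / (1 - δ)))
    (hsp : #(supp x) ≤ K) (hinj : Function.Injective ord)
    (hcover : ∀ j, x j ≠ 0 → ∃ i, ord i = j)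
    (hmono : ∀ i i' : Fin K, i ≤ i' → |x (ord i')| ≤ |x (ord i)|)
    (hratio : ∀ (i : Fin K) (hi : (i : ℕ) + 1 < K), |x (ord i)| ≥ α * |x (ord ⟨i + 1, hi⟩)|) :
    ∀ ℓ ≤ K, supp x ∩ leading ord ℓ ⊆ Λ ℓ
  | 0, _ => by simp [leading_zero]
  | ℓ + 1, (h : ℓ < K) => by
    have ih := run.supp_inter_leading_subset hR hδ hα hsp hinj hcover hmono hratio ℓ (by omega)
    rw [run.step ℓ h, leading_succ h]
    by_cases hx : x (ord ⟨ℓ, h⟩) = 0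
    · rw [inter_insert_of_notMem (by simpa [mem_supp] using hx)]
      exact ih.trans (subset_insert _ _)
    have hlead := leading_subset_supp hmono h hx
    -- `Λ ℓ` contains the `ℓ` leading positions and has at most `ℓ` elements
    have hΛ : Λ ℓ = leading ord ℓ := (eq_of_subset_of_card_le (inter_eq_right.2 hlead ▸ ih)
      ((run.card_le ℓ h.le).trans (card_leading hinj h.le).ge)).symm
    have hα0 := pos_of_gt_threshold hR.1.le hδ (Real.sqrt_nonneg _) hα
    have hsel : jsel ℓ = ord ⟨ℓ, h⟩ := by
      refine eq_of_selects_max_correlation hR hδ hα hsp (hΛ ▸ hlead) (mem_supp.2 hx)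
        (hΛ ▸ fun hmem => lt_irrefl ℓ ((mem_leading_iff hinj).1 hmem)) (fun j hj hne => ?_)
        (run.leastSquares ℓ h.le) (run.select ℓ h)
      exact mul_abs_le_of_notMem_leading hα0.le hcover hmono hratio h (hΛ ▸ hj) hne
    rw [hsel, hΛ]
    exact inter_subset_right

theorem IsOMPRun.eq_of_supp_subset {δ : ℝ} {x : Fin N → ℝ} (run : IsOMPRun Φ (Φ *ᵥ x) K Λ xs jsel)
    (hR : RIP (K + 1) Φ δ) (hx : supp x ⊆ Λ K) : xs K = x := by
  have hK : #(supp x ∪ Λ K) ≤ K + 1 := by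
    rw [union_eq_right.2 hx]
    exact (run.card_le K le_rfl).trans K.le_succ
  have herr := (run.leastSquares K le_rfl).one_sub_mul_l2_sub_le hR hK
  have htail : restr (Λ K)ᶜ x = 0 := by
    ext j
    simpa [restr] using supp_subset_iff.1 hx j
  rw [htail, l2_zero] at herr
  have hzero : l2 (x - xs K) = 0 :=
    le_antisymm (nonpos_of_mul_nonpos_right herr (by linarith [hR.2.1])) (l2_nonneg _)
  rw [l2_eq_zero, sub_eq_zero] at hzero
  exact hzero.symm

end Run

/-- The entries of `x`, ordered by magnitude, are given by `x ∘ ord`. -/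
theorem stmt8 {M N K : ℕ} (Φ : Matrix (Fin M) (Fin N) ℝ) (δ α : ℝ) (x : Fin N → ℝ)
    (hRIP : RIP (K + 1) Φ δ) (hδ : δ < 1 / 3)
    (hsp : (supp x).card ≤ K)
    (ord : Fin K → Fin N) (hinj : Function.Injective ord)
    (hcover : ∀ j : Fin N, x j ≠ 0 → ∃ i, ord i = j)
    (hmono : ∀ i i' : Fin K, i ≤ i' → |x (ord i')| ≤ |x (ord i)|)
    (hratio : ∀ (i : Fin K) (hi : (i : ℕ) + 1 < K), |x (ord i)| ≥ α * |x (ord ⟨i + 1, hi⟩)|)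
    (hα : α > (1 + 2 * (δ / (1 - δ)) * Real.sqrt ((K : ℝ) - 1)) / (1 - 2 * δ / (1 - δ)))
    (y : Fin M → ℝ) (hy : y = Φ.mulVec x)
    (Λ : ℕ → Finset (Fin N)) (xs : ℕ → Fin N → ℝ) (jsel : ℕ → Fin N)
    (hΛ0 : Λ 0 = ∅)
    (hls : ∀ ℓ ≤ K, supp (xs ℓ) ⊆ Λ ℓ ∧
      ∀ z : Fin N → ℝ, supp z ⊆ Λ ℓ →
        l2 (y - Φ.mulVec (xs ℓ)) ≤ l2 (y - Φ.mulVec z))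
    (hsel : ∀ ℓ < K, ∀ j : Fin N,
      |(Φᵀ.mulVec (y - Φ.mulVec (xs ℓ))) j| ≤ |(Φᵀ.mulVec (y - Φ.mulVec (xs ℓ))) (jsel ℓ)|)
    (hstep : ∀ ℓ < K, Λ (ℓ + 1) = insert (jsel ℓ) (Λ ℓ)) :
    supp x ⊆ Λ K ∧ xs K = x := by
  subst hy
  have run : IsOMPRun Φ (Φ *ᵥ x) K Λ xs jsel := ⟨hΛ0, hls, hsel, hstep⟩
  have hsupp : supp x ⊆ Λ K := by
    have := run.supp_inter_leading_subset hRIP hδ hα hsp hinj hcover hmono hratio K le_rfl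
    rwa [inter_eq_left.2 (supp_subset_leading hcover)] at this
  exact ⟨hsupp, run.eq_of_supp_subset hRIP hsupp⟩

end OMP
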